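/- arXiv:math/0609638 — 2 statements merged into one kernel-verified Lean document; each statement's English description precedes it below -/
import Mathlib

section
/- Let p be a prime, κ a limit ordinal, (G_α)_{α<κ} an increasing continuous chain of abelian groups with union G, and (λ_α)_{α<κ} a nondecreasing continuous sequence of cardinals with supremum λ. Suppose for each α < κ there are homomorphisms f_γ^α : G_α → ℤ/pℤ for γ < λ_α such that: (a) f_γ^β restricted to G_α equals f_γ^α whenever α ≤ β < κ and γ < λ_α; (b) for each α, the family (f_γ^α)_{γ<λ_α} is linearly independent over ℤ/pℤ; (c) if α ≤ β < κ and λ_α ≤ γ < λ_β, then f_γ^β restricted to G_α is zero. Then the homomorphisms f_γ : G → ℤ/pℤ (γ < λ) defined by f_γ = ⋃{f_γ^α : γ < λ_α} form a linearly independent family in Hom(G, ℤ/pℤ). -/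
/-!
A finite subfamily of `(f_γ)_{γ < λ}` already lives at a single level `α < κ`, since the
levels `{γ | γ < λ_α}` increase with `α` and exhaust `λ`. On `G_α` the union homomorphisms
restrict to the `f_γ^α`, which are independent, and a family whose restrictions to a
subgroup are independent is itself independent.
-/

open Set

def AddMonoidHom.precompₗ (R : Type*) {K G N : Type*} [Semiring R] [AddCommMonoid K]
    [AddCommMonoid G] [AddCommMonoid N] [Module R N] (φ : K →+ G) :
    (G →+ N) →ₗ[R] (K →+ N) where
  toFun ψ := ψ.comp φ
  map_add' _ _ := rfl
  map_smul' _ _ := rfl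

theorem Cardinal.exists_lt_ord_of_lt_ord_iSup {ι : Sort*} [Nonempty ι] {c : ι → Cardinal}
    {γ : Ordinal} (hγ : γ < (⨆ i, c i).ord) : ∃ i, γ < (c i).ord := by
  by_contra! h
  exact (Cardinal.lt_ord.mp hγ).not_ge (ciSup_le fun i => Cardinal.ord_le.mp (h i))

theorem AddMonoidHom.linearIndependent_of_comp_subtype {R ι G N : Type*} [Semiring R]
    [AddCommGroup G] [AddCommMonoid N] [Module R N] {H : AddSubgroup G} {v : ι → G →+ N}
    (hv : LinearIndependent R fun i => (v i).comp H.subtype) : LinearIndependent R v :=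
  hv.of_comp (H.subtype.precompₗ R)

theorem linearIndependent_of_chain_general (p : ℕ)
    (κ : Ordinal) (hκ : Order.IsSuccLimit κ)
    (G : Type) [AddCommGroup G]
    (Gs : Ordinal → AddSubgroup G)
    (lam : Ordinal → Cardinal)
    (hlmono : ∀ {α β : Ordinal}, α ≤ β → β < κ → lam α ≤ lam β)
    (lamSup : Cardinal)
    (hsup : lamSup = ⨆ α : {α : Ordinal // α < κ}, lam α.1)
    (f : (α : Ordinal) → Ordinal → (Gs α →+ ZMod p))
    -- (b) linear independence at each level
    (hb : ∀ α < κ, LinearIndependent (ZMod p)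
      (fun γ : {γ : Ordinal // γ < (lam α).ord} => f α γ.1))
    -- the union homomorphisms `f_γ = ⋃ {f_γ^α : γ < λ_α}`
    (F : Ordinal → (G →+ ZMod p))
    (hF : ∀ {α γ : Ordinal}, α < κ → γ < (lam α).ord →
      ∀ x : Gs α, F γ ↑x = f α γ x) :
    LinearIndependent (ZMod p)
      (fun γ : {γ : Ordinal // γ < lamSup.ord} => F γ.1) := by
  have : Nonempty {α : Ordinal // α < κ} := ⟨⟨0, hκ.bot_lt⟩⟩
  let level (α : {α : Ordinal // α < κ}) : Set {γ // γ < lamSup.ord} :=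
    {γ | γ.1 < (lam α).ord}
  have hdir : Directed (· ⊆ ·) level := Monotone.directed_le fun α β hαβ _ hγ =>
    hγ.trans_le (Cardinal.ord_le_ord.mpr (hlmono hαβ β.2))
  have hcover : ⋃ α, level α = univ :=
    eq_univ_of_forall fun γ => mem_iUnion.mpr (Cardinal.exists_lt_ord_of_lt_ord_iSup (hsup ▸ γ.2))
  have hlevel (α) : LinearIndepOn (ZMod p) (fun γ => F γ.1) (level α) := by
    refine AddMonoidHom.linearIndependent_of_comp_subtype (H := Gs α) ?_
    convert (hb α α.2).comp (fun γ : level α => ⟨γ.1.1, γ.2⟩)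
      fun _ _ h => Subtype.ext (Subtype.ext (congrArg Subtype.val h :)) with γ
    ext x
    exact hF α.2 γ.2 x
  rw [← linearIndepOn_univ_iff, ← hcover]
  exact linearIndepOn_iUnion_of_directed hdir hlevel

/-- Let `p` be a prime, `κ` a limit ordinal, `(G_α)_{α<κ}` an increasing
continuous chain of subgroups of an abelian group `G` with union `G`, and
`(λ_α)_{α<κ}` a nondecreasing continuous sequence of cardinals with supremum
`λ`.  Given homomorphisms `f_γ^α : G_α → ℤ/pℤ` (`γ < λ_α`) that are compatible
under restriction, linearly independent at each level `α`, and such that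
`f_γ^β` vanishes on `G_α` whenever `λ_α ≤ γ < λ_β`, the union homomorphisms
`f_γ : G → ℤ/pℤ` (`γ < λ`) form a linearly independent family in
`Hom(G, ℤ/pℤ)`. -/
theorem linearIndependent_of_chain (p : ℕ) (hp : p.Prime)
    (κ : Ordinal) (hκ : Order.IsSuccLimit κ)
    (G : Type) [AddCommGroup G]
    (Gs : Ordinal → AddSubgroup G)
    (hmono : ∀ {α β : Ordinal}, α ≤ β → β < κ → Gs α ≤ Gs β)
    (hcont : ∀ δ < κ, Order.IsSuccLimit δ →
      (Gs δ : Set G) = ⋃ (α : Ordinal) (_ : α < δ), (Gs α : Set G))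
    (hunion : (⋃ (α : Ordinal) (_ : α < κ), (Gs α : Set G)) = Set.univ)
    (lam : Ordinal → Cardinal)
    (hlmono : ∀ {α β : Ordinal}, α ≤ β → β < κ → lam α ≤ lam β)
    (hlcont : ∀ δ < κ, Order.IsSuccLimit δ → lam δ = ⨆ α : {α : Ordinal // α < δ}, lam α.1)
    (lamSup : Cardinal)
    (hsup : lamSup = ⨆ α : {α : Ordinal // α < κ}, lam α.1)
    (f : (α : Ordinal) → Ordinal → (Gs α →+ ZMod p))
    -- (a) compatibility under restriction
    (ha : ∀ {α β γ : Ordinal} (h : Gs α ≤ Gs β), α ≤ β → β < κ → γ < (lam α).ord →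
      (f β γ).comp (AddSubgroup.inclusion h) = f α γ)
    -- (b) linear independence at each level
    (hb : ∀ α < κ, LinearIndependent (ZMod p)
      (fun γ : {γ : Ordinal // γ < (lam α).ord} => f α γ.1))
    -- (c) new homomorphisms vanish on old groups
    (hc : ∀ {α β γ : Ordinal} (h : Gs α ≤ Gs β), α ≤ β → β < κ →
      (lam α).ord ≤ γ → γ < (lam β).ord →
      (f β γ).comp (AddSubgroup.inclusion h) = 0)
    -- the union homomorphisms `f_γ = ⋃ {f_γ^α : γ < λ_α}`
    (F : Ordinal → (G →+ ZMod p))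
    (hF : ∀ {α γ : Ordinal}, α < κ → γ < (lam α).ord →
      ∀ x : Gs α, F γ ↑x = f α γ x) :
    LinearIndependent (ZMod p)
      (fun γ : {γ : Ordinal // γ < lamSup.ord} => F γ.1) :=
  linearIndependent_of_chain_general p κ hκ G Gs lam hlmono lamSup hsup f hb F hF
end

section
/- Let p be a prime, κ a regular uncountable cardinal, S ⊆ κ an unbounded subset, (G_α)_{α<κ} an increasing continuous chain of abelian groups with union G, and (λ_α)_{α<κ} a nondecreasing continuous sequence of cardinals with supremum λ. Suppose there are homomorphisms f_γ^α : G_α → ℤ/pℤ (γ < λ_α) and h_{γ,δ}^α : G_α → ℤ (γ < λ_α, α ≤ δ < κ) such that: (a) f_γ^β restricted to G_α equals f_γ^α for α ≤ β, γ < λ_α; (b) for each α the family (f_γ^α)_{γ<λ_α} is linearly independent over ℤ/pℤ; (c) the composition of h_{γ,δ}^α with the reduction ℤ → ℤ/pℤ equals f_γ^α; (d) h_{γ,δ}^β restricted to G_α equals h_{γ,δ}^α whenever α < β ≤ δ and γ < λ_α; (e) for each α, the family (h_{γ,δ}^α)_{γ<λ_α, α≤δ<κ} is ℤ-linearly independent,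 so that M_α := ⊕_{γ<λ_α, α≤δ<κ} ℤ·h_{γ,δ}^α is a free subgroup of Hom(G_α,ℤ) with this basis, representations being unique; (f) for every α ∈ S, every g ∈ Hom(G_{α+1},ℤ) whose composition with ℤ → ℤ/pℤ is a nonzero element of the ℤ/pℤ-span of {f_γ^{α+1} : γ < λ_{α+1}} belongs to M_{α+1}; (g) if α ≤ β < κ and λ_α ≤ γ < λ_β, then f_γ^β and h_{γ,ρ}^β (ρ ≥ β) restrict to zero on G_α. Define f_γ : G → ℤ/pℤ by f_γ = ⋃{f_γ^α : γ < λ_α}. Then no nonzero finite ℤ/pℤ-linear combination of the f_γ (γ < λ) equals the composition of some g ∈ Hom(G,ℤ) with the reduction ℤ → ℤ/pℤ; consequently the classes of the f_γ in Hom(G,ℤ/pℤ)/φ^p(Hom(G,ℤ)) are linearly independent, where φ^p is composition with ℤ → ℤ/pℤ. -/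
/-!
Suppose `∑ z_γ f_γ = φ^p(g)` is nonzero, say at `x ∈ G_β`. For every `α ∈ S` beyond `β` and the
levels of the `γ`'s, the reduction of `g ↾ G_{α+1}` is a nonzero combination of the `f_γ^{α+1}`, so
by (f) `g ↾ G_{α+1}` lies in `M_{α+1}`. A representation there involves finitely many `δ`, all
below some `b < κ`. Representing `g` at a level `α' + 1 > b` of the same kind and restricting to
`G_{α+1}` with (d) and (g) gives a second representation in `M_{α+1}` using only `δ > b`. By (e)
both vanish, so `g x = 0`, a contradiction. Linear independence in the quotient then follows from
the linear independence of the `f_γ`, checked on a single level by (b), since by the first part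
their span meets the image of `φ^p` only in `0`.
-/

/-- The map `φ^p : Hom(G,ℤ) → Hom(G,ℤ/pℤ)` induced by the reduction `ℤ → ℤ/pℤ`. -/
def phiP (p : ℕ) (G : Type) [AddCommGroup G] : (G →+ ℤ) → (G →+ ZMod p) :=
  fun f => (Int.castAddHom (ZMod p)).comp f

/-- The image `φ^p(Hom(G,ℤ))`, as a `ℤ/pℤ`-subspace of `Hom(G,ℤ/pℤ)`. -/
def phiPRange (p : ℕ) (G : Type) [AddCommGroup G] :
    Submodule (ZMod p) (G →+ ZMod p) where
  carrier := Set.range (phiP p G)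
  zero_mem' := ⟨0, by ext x; simp [phiP]⟩
  add_mem' := by
    rintro _ _ ⟨f, rfl⟩ ⟨g, rfl⟩
    exact ⟨f + g, by ext x; simp [phiP]⟩
  smul_mem' := by
    rintro c _ ⟨f, rfl⟩
    obtain ⟨m, rfl⟩ := ZMod.intCast_surjective c
    refine ⟨m • f, ?_⟩
    ext x
    simp [phiP]

open Set Submodule Function

section Levels

variable {G : Type} [AddCommGroup G] {Gs : Ordinal → AddSubgroup G} {κ : Cardinal}
  {lam : Ordinal → Cardinal}

theorem exists_lt_forall_lt_ord_of_lt_ord_iSup {o : Ordinal} (ho : 0 < o)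
    (hlmono : ∀ {α β : Ordinal}, α ≤ β → β < o → lam α ≤ lam β) {t : Set Ordinal}
    (ht : t.Finite) (htL : ∀ γ ∈ t, γ < (⨆ α : {α : Ordinal // α < o}, lam α.1).ord) :
    ∃ α < o, ∀ γ ∈ t, γ < (lam α).ord := by
  have : Nonempty {α : Ordinal // α < o} := ⟨⟨0, ho⟩⟩
  have hev : ∀ γ ∈ t, ∀ᶠ α : {α : Ordinal // α < o} in Filter.atTop, γ < (lam α).ord := by
    intro γ hγ
    obtain ⟨α, hα⟩ := exists_lt_of_lt_ciSup (Cardinal.lt_ord.1 (htL γ hγ))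
    exact Filter.eventually_atTop.2 ⟨α, fun β hαβ =>
      (Cardinal.lt_ord.2 hα).trans_le (Cardinal.ord_le_ord.2 (hlmono hαβ β.2))⟩
  obtain ⟨α, hα⟩ := ((Filter.eventually_all_finite ht).2 hev).exists
  exact ⟨α, α.2, hα⟩

theorem exists_lt_mem_span_image_inter {ι R M β : Type*} [Semiring R] [AddCommMonoid M]
    [Module R M] [LinearOrder β] [OrderBot β] {v : ι → M} {s : Set ι} {d : ι → β} {o : β}
    (ho : ⊥ < o) (hd : ∀ i ∈ s, d i < o) {x : M} (hx : x ∈ span R (v '' s)) :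
    ∃ b < o, x ∈ span R (v '' (s ∩ {i | d i ≤ b})) := by
  obtain ⟨l, hls, rfl⟩ := (Finsupp.mem_span_image_iff_linearCombination R).1 hx
  have hsupp : ↑l.support ⊆ s := (Finsupp.mem_supported R l).1 hls
  refine ⟨l.support.sup d, (Finset.sup_lt_iff ho).2 fun i hi => hd i (hsupp hi),
    (Finsupp.mem_span_image_iff_linearCombination R).2 ⟨l, ?_, rfl⟩⟩
  exact (Finsupp.mem_supported R l).2 fun i hi => ⟨hsupp hi, Finset.le_sup hi⟩

/-- `span ℤ (uncurry (h β) '' liftIndex κ lam β β)` is the group `M_β` of (e); raising `ρ` keeps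
only the lifts `h β γ δ` with `ρ ≤ δ`. -/
def liftIndex (κ : Cardinal) (lam : Ordinal → Cardinal) (β ρ : Ordinal) :
    Set (Ordinal × Ordinal) :=
  {q | q.1 < (lam β).ord ∧ ρ ≤ q.2 ∧ q.2 < κ.ord}

theorem comp_inclusion_mem_span_liftIndex (h : (α : Ordinal) → Ordinal → Ordinal → (Gs α →+ ℤ))
    {α β ρ : Ordinal} (hsub : Gs α ≤ Gs β)
    (hd : ∀ γ δ, γ < (lam α).ord → ρ ≤ δ → δ < κ.ord →
      (h β γ δ).comp (AddSubgroup.inclusion hsub) = h α γ δ)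
    (hg : ∀ γ δ, (lam α).ord ≤ γ → γ < (lam β).ord → ρ ≤ δ → δ < κ.ord →
      (h β γ δ).comp (AddSubgroup.inclusion hsub) = 0)
    {φ : Gs β →+ ℤ} (hφ : φ ∈ span ℤ (uncurry (h β) '' liftIndex κ lam β ρ)) :
    φ.comp (AddSubgroup.inclusion hsub) ∈ span ℤ (uncurry (h α) '' liftIndex κ lam α ρ) := by
  let res := (AddMonoidHom.compHom' (AddSubgroup.inclusion hsub) :
    (Gs β →+ ℤ) →+ (Gs α →+ ℤ)).toIntLinearMap
  refine (map_span_le res _ _).2 ?_ (mem_map_of_mem hφ)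
  rintro _ ⟨⟨γ, δ⟩, ⟨hγ, hρδ, hδ⟩, rfl⟩
  by_cases hγα : γ < (lam α).ord
  · rw [show res (uncurry (h β) (γ, δ)) = h α γ δ from hd γ δ hγα hρδ hδ]
    exact subset_span ⟨(γ, δ), ⟨hγα, hρδ, hδ⟩, rfl⟩
  · rw [show res (uncurry (h β) (γ, δ)) = 0 from hg γ δ (not_lt.1 hγα) hγ hρδ hδ]
    exact zero_mem _

theorem comp_subtype_eq_zero_of_mem_span_liftIndex
    (h : (α : Ordinal) → Ordinal → Ordinal → (Gs α →+ ℤ))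
    (hmono : ∀ {α β : Ordinal}, α ≤ β → β < κ.ord → Gs α ≤ Gs β)
    (hfd : ∀ {α β γ δ : Ordinal} (hsub : Gs α ≤ Gs β), α < β → β ≤ δ → δ < κ.ord →
      γ < (lam α).ord → (h β γ δ).comp (AddSubgroup.inclusion hsub) = h α γ δ)
    (hfg : ∀ {α β γ : Ordinal} (hsub : Gs α ≤ Gs β), α ≤ β → β < κ.ord →
      (lam α).ord ≤ γ → γ < (lam β).ord → ∀ ρ : Ordinal, β ≤ ρ → ρ < κ.ord →
        (h β γ ρ).comp (AddSubgroup.inclusion hsub) = 0)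
    {β : Ordinal} (hβ : β < κ.ord) (hfe : LinearIndepOn ℤ (uncurry (h β)) (liftIndex κ lam β β))
    (g : G →+ ℤ) (hgβ : g.comp (Gs β).subtype ∈ span ℤ (uncurry (h β) '' liftIndex κ lam β β))
    (hcof : ∀ b < κ.ord, ∃ β', b < β' ∧ β' < κ.ord ∧
      g.comp (Gs β').subtype ∈ span ℤ (uncurry (h β') '' liftIndex κ lam β' β')) :
    g.comp (Gs β).subtype = 0 := by
  obtain ⟨b, hb, hgb⟩ := exists_lt_mem_span_image_inter (d := Prod.snd) (bot_le.trans_lt hβ)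
    (fun q hq => hq.2.2) hgβ
  obtain ⟨β', hβ'b, hβ', hgβ'⟩ := hcof (max β b) (max_lt hβ hb)
  have hββ' : β < β' := (le_max_left _ _).trans_lt hβ'b
  have hsub := hmono hββ'.le hβ'
  have hgβ_high : g.comp (Gs β).subtype ∈ span ℤ (uncurry (h β) '' liftIndex κ lam β β') :=
    comp_inclusion_mem_span_liftIndex h hsub
      (fun _ _ hγ hρδ hδ => hfd hsub hββ' hρδ hδ hγ)
      (fun _ δ hαγ hγβ hρδ hδ => hfg hsub hββ'.le hβ' hαγ hγβ δ hρδ hδ) hgβ'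
  have hdisj : Disjoint (liftIndex κ lam β β ∩ {q | q.2 ≤ b}) (liftIndex κ lam β β') :=
    disjoint_left.2 fun q hq hq' =>
      (hq.2.trans_lt ((le_max_right _ _).trans_lt hβ'b)).not_ge hq'.2.1
  have hhigh : liftIndex κ lam β β' ⊆ liftIndex κ lam β β :=
    fun q ⟨hγ, hρδ, hδ⟩ => ⟨hγ, hββ'.le.trans hρδ, hδ⟩
  have hspan := ((linearIndepOn_union_iff hdisj).1
    (hfe.mono (union_subset inter_subset_left hhigh))).2.2
  exact disjoint_def.1 hspan _ hgb hgβ_high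

theorem sum_smul_eq_zero_of_eq_comp {p : ℕ} {S : Set Ordinal} (hκ : Order.IsSuccLimit κ.ord)
    (hSsub : ∀ α ∈ S, α < κ.ord) (hSunb : ∀ β < κ.ord, ∃ α ∈ S, β ≤ α)
    (hmono : ∀ {α β : Ordinal}, α ≤ β → β < κ.ord → Gs α ≤ Gs β)
    (hunion : (⋃ (α : Ordinal) (_ : α < κ.ord), (Gs α : Set G)) = Set.univ)
    (hlmono : ∀ {α β : Ordinal}, α ≤ β → β < κ.ord → lam α ≤ lam β)
    (f : (α : Ordinal) → Ordinal → (Gs α →+ ZMod p))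
    (h : (α : Ordinal) → Ordinal → Ordinal → (Gs α →+ ℤ))
    (hfd : ∀ {α β γ δ : Ordinal} (hsub : Gs α ≤ Gs β), α < β → β ≤ δ → δ < κ.ord →
      γ < (lam α).ord → (h β γ δ).comp (AddSubgroup.inclusion hsub) = h α γ δ)
    (hfg : ∀ {α β γ : Ordinal} (hsub : Gs α ≤ Gs β), α ≤ β → β < κ.ord →
      (lam α).ord ≤ γ → γ < (lam β).ord → ∀ ρ : Ordinal, β ≤ ρ → ρ < κ.ord →
        (h β γ ρ).comp (AddSubgroup.inclusion hsub) = 0)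
    (hfe : ∀ α < κ.ord, LinearIndepOn ℤ (uncurry (h α)) (liftIndex κ lam α α))
    (hff : ∀ α ∈ S, ∀ g : Gs (α + 1) →+ ℤ,
      (Int.castAddHom (ZMod p)).comp g ∈ Submodule.span (ZMod p)
        (Set.range fun γ : {γ : Ordinal // γ < (lam (α + 1)).ord} =>
          f (α + 1) γ.1) →
      (Int.castAddHom (ZMod p)).comp g ≠ 0 →
      g ∈ Submodule.span ℤ
        (Set.range fun q : {q : Ordinal × Ordinal //
            q.1 < (lam (α + 1)).ord ∧ α + 1 ≤ q.2 ∧ q.2 < κ.ord} =>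
          h (α + 1) q.1.1 q.1.2))
    (F : Ordinal → (G →+ ZMod p))
    (hF : ∀ {α γ : Ordinal}, α < κ.ord → γ < (lam α).ord →
      ∀ x : Gs α, F γ ↑x = f α γ x)
    (E : Finset Ordinal) (hE : ∀ γ ∈ E, γ < (⨆ α : {α : Ordinal // α < κ.ord}, lam α.1).ord)
    (z : Ordinal → ZMod p) (g : G →+ ℤ)
    (hEg : ∑ γ ∈ E, z γ • F γ = (Int.castAddHom (ZMod p)).comp g) :
    ∑ γ ∈ E, z γ • F γ = 0 := by
  obtain ⟨α₀, hα₀, hEα₀⟩ :=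
    exists_lt_forall_lt_ord_of_lt_ord_iSup hκ.bot_lt hlmono E.finite_toSet hE
  ext x
  by_contra hx
  obtain ⟨β, hβ, hxβ⟩ : ∃ β < κ.ord, x ∈ Gs β := by simpa using hunion.ge (mem_univ x)
  have hred_ne : ∀ α, β ≤ α → α < κ.ord →
      (Int.castAddHom (ZMod p)).comp (g.comp (Gs α).subtype) ≠ 0 := fun α hβα hα hg0 =>
    hx (by simpa [hEg] using DFunLike.congr_fun hg0 ⟨x, hmono hβα hα hxβ⟩)
  have hmem : ∀ α ∈ S, max α₀ β ≤ α → g.comp (Gs (α + 1)).subtype ∈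
      span ℤ (uncurry (h (α + 1)) '' liftIndex κ lam (α + 1) (α + 1)) := by
    intro α hαS hα
    have hα1 : α + 1 < κ.ord := hκ.add_one_lt (hSsub α hαS)
    have hle : ∀ {γ}, γ ≤ max α₀ β → γ ≤ α + 1 := fun hγ =>
      (Order.lt_add_one_iff.2 (hγ.trans hα)).le
    have hEα : ∀ γ ∈ E, γ < (lam (α + 1)).ord := fun γ hγ =>
      (hEα₀ γ hγ).trans_le (Cardinal.ord_le_ord.2 (hlmono (hle (le_max_left _ _)) hα1))
    have hred_eq : (Int.castAddHom (ZMod p)).comp (g.comp (Gs (α + 1)).subtype) =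
        ∑ γ ∈ E, z γ • f (α + 1) γ := by
      ext y
      have hy := DFunLike.congr_fun hEg (y : G)
      simp only [AddMonoidHom.comp_apply, AddSubgroup.subtype_apply,
        AddMonoidHom.finsetSum_apply, AddMonoidHom.smul_apply] at hy ⊢
      rw [← hy]
      exact Finset.sum_congr rfl fun γ hγ => by rw [hF hα1 (hEα γ hγ)]
    rw [image_eq_range]
    refine hff α hαS _ ?_ (hred_ne (α + 1) (hle (le_max_right _ _)) hα1)
    rw [hred_eq]
    exact sum_mem fun γ hγ => smul_mem _ _ (subset_span ⟨⟨γ, hEα γ hγ⟩, rfl⟩)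
  obtain ⟨α, hαS, hα⟩ := hSunb (max α₀ β) (max_lt hα₀ hβ)
  have hα1 := hκ.add_one_lt (hSsub α hαS)
  refine hred_ne (α + 1) (Order.lt_add_one_iff.2 ((le_max_right _ _).trans hα)).le hα1 ?_
  rw [comp_subtype_eq_zero_of_mem_span_liftIndex h hmono hfd hfg hα1 (hfe _ hα1) g
    (hmem α hαS hα) ?_, AddMonoidHom.comp_zero]
  intro b hb
  obtain ⟨α', hα'S, hα'⟩ := hSunb (max b (max α₀ β)) (max_lt hb (max_lt hα₀ hβ))
  exact ⟨α' + 1, Order.lt_add_one_iff.2 ((le_max_left _ _).trans hα'),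
    hκ.add_one_lt (hSsub α' hα'S), hmem α' hα'S ((le_max_right _ _).trans hα')⟩

theorem linearIndepOn_of_forall_level {p : ℕ} (hκ : 0 < κ.ord)
    (hlmono : ∀ {α β : Ordinal}, α ≤ β → β < κ.ord → lam α ≤ lam β)
    (f : (α : Ordinal) → Ordinal → (Gs α →+ ZMod p))
    (hfb : ∀ α < κ.ord, LinearIndepOn (ZMod p) (f α) (Iio (lam α).ord))
    (F : Ordinal → (G →+ ZMod p))
    (hF : ∀ {α γ : Ordinal}, α < κ.ord → γ < (lam α).ord →
      ∀ x : Gs α, F γ ↑x = f α γ x) :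
    LinearIndepOn (ZMod p) F (Iio (⨆ α : {α : Ordinal // α < κ.ord}, lam α.1).ord) := by
  refine linearIndepOn_of_finite _ fun t ht htfin => ?_
  obtain ⟨α, hα, htα⟩ := exists_lt_forall_lt_ord_of_lt_ord_iSup hκ hlmono htfin ht
  let res := (AddMonoidHom.compHom' (Gs α).subtype :
    (G →+ ZMod p) →+ (Gs α →+ ZMod p)).toZModLinearMap p
  refine LinearIndepOn.of_comp res (((hfb α hα).mono htα).congr fun γ hγ => ?_)
  ext x
  exact (hF hα (htα γ hγ) x).symm

end Levels

theorem disjoint_span_phiPRange {p : ℕ} {G : Type} [AddCommGroup G] {F : Ordinal → (G →+ ZMod p)}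
    {s : Set Ordinal} (hlift : ∀ (E : Finset Ordinal), (∀ γ ∈ E, γ ∈ s) →
      ∀ (z : Ordinal → ZMod p) (g : G →+ ℤ),
        ∑ γ ∈ E, z γ • F γ = (Int.castAddHom (ZMod p)).comp g → ∑ γ ∈ E, z γ • F γ = 0) :
    Disjoint (span (ZMod p) (F '' s)) (phiPRange p G) := by
  refine disjoint_def.2 fun φ hφ ⟨g, hg⟩ => ?_
  obtain ⟨l, hl, rfl⟩ := (Finsupp.mem_span_image_iff_linearCombination (ZMod p)).1 hφ
  rw [Finsupp.linearCombination_apply, Finsupp.sum] at hg ⊢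
  exact hlift l.support (fun γ hγ => (Finsupp.mem_supported _ l).1 hl hγ) l g hg.symm

theorem no_lifting_of_combinations_general (p : ℕ)
    (κ : Cardinal) (hunc : Cardinal.aleph0 < κ)
    (S : Set Ordinal) (hSsub : ∀ α ∈ S, α < κ.ord)
    (hSunb : ∀ β < κ.ord, ∃ α ∈ S, β ≤ α)
    (G : Type) [AddCommGroup G]
    (Gs : Ordinal → AddSubgroup G)
    (hmono : ∀ {α β : Ordinal}, α ≤ β → β < κ.ord → Gs α ≤ Gs β)
    (hunion : (⋃ (α : Ordinal) (_ : α < κ.ord), (Gs α : Set G)) = Set.univ)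
    (lam : Ordinal → Cardinal)
    (hlmono : ∀ {α β : Ordinal}, α ≤ β → β < κ.ord → lam α ≤ lam β)
    (lamSup : Cardinal)
    (hsup : lamSup = ⨆ α : {α : Ordinal // α < κ.ord}, lam α.1)
    (f : (α : Ordinal) → Ordinal → (Gs α →+ ZMod p))
    (h : (α : Ordinal) → Ordinal → Ordinal → (Gs α →+ ℤ))
    -- (b) linear independence of the `f`'s at each level
    (hfb : ∀ α < κ.ord, LinearIndependent (ZMod p)
      (fun γ : {γ : Ordinal // γ < (lam α).ord} => f α γ.1))
    -- (d) compatibility of the `h`'s under restriction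
    (hfd : ∀ {α β γ δ : Ordinal} (hsub : Gs α ≤ Gs β), α < β → β ≤ δ → δ < κ.ord →
      γ < (lam α).ord → (h β γ δ).comp (AddSubgroup.inclusion hsub) = h α γ δ)
    -- (e) `ℤ`-linear independence of the `h`'s at each level, so that
    -- `M_α = ⊕ ℤ·h_{γ,δ}^α` is free with basis the `h`'s
    (hfe : ∀ α < κ.ord, LinearIndependent ℤ
      (fun q : {q : Ordinal × Ordinal //
          q.1 < (lam α).ord ∧ α ≤ q.2 ∧ q.2 < κ.ord} => h α q.1.1 q.1.2))
    -- (f) for `α ∈ S`, homomorphisms `G_{α+1} → ℤ` whose reduction is a nonzero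
    -- element of the span of the `f_γ^{α+1}` lie in `M_{α+1}`
    (hff : ∀ α ∈ S, ∀ g : Gs (α + 1) →+ ℤ,
      (Int.castAddHom (ZMod p)).comp g ∈ Submodule.span (ZMod p)
        (Set.range fun γ : {γ : Ordinal // γ < (lam (α + 1)).ord} =>
          f (α + 1) γ.1) →
      (Int.castAddHom (ZMod p)).comp g ≠ 0 →
      g ∈ Submodule.span ℤ
        (Set.range fun q : {q : Ordinal × Ordinal //
            q.1 < (lam (α + 1)).ord ∧ α + 1 ≤ q.2 ∧ q.2 < κ.ord} =>
          h (α + 1) q.1.1 q.1.2))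
    -- (g) new `f`'s and `h`'s vanish on old groups
    (hfg : ∀ {α β γ : Ordinal} (hsub : Gs α ≤ Gs β), α ≤ β → β < κ.ord →
      (lam α).ord ≤ γ → γ < (lam β).ord →
      (f β γ).comp (AddSubgroup.inclusion hsub) = 0 ∧
      ∀ ρ : Ordinal, β ≤ ρ → ρ < κ.ord →
        (h β γ ρ).comp (AddSubgroup.inclusion hsub) = 0)
    -- the union homomorphisms `f_γ = ⋃ {f_γ^α : γ < λ_α}`
    (F : Ordinal → (G →+ ZMod p))
    (hF : ∀ {α γ : Ordinal}, α < κ.ord → γ < (lam α).ord →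
      ∀ x : Gs α, F γ ↑x = f α γ x) :
    (∀ (E : Finset Ordinal), (∀ γ ∈ E, γ < lamSup.ord) →
      ∀ (z : Ordinal → ZMod p) (g : G →+ ℤ),
        ∑ γ ∈ E, z γ • F γ = (Int.castAddHom (ZMod p)).comp g →
        ∑ γ ∈ E, z γ • F γ = 0) ∧
    LinearIndependent (ZMod p)
      (fun γ : {γ : Ordinal // γ < lamSup.ord} =>
        Submodule.Quotient.mk (p := phiPRange p G) (F γ.1)) := by
  subst hsup
  have hκ : Order.IsSuccLimit κ.ord := Cardinal.isSuccLimit_ord hunc.le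
  have hlift := sum_smul_eq_zero_of_eq_comp hκ hSsub hSunb hmono hunion hlmono f h hfd
    (fun hsub hαβ hβ hγα hγβ => (hfg hsub hαβ hβ hγα hγβ).2) hfe hff F hF
  refine ⟨hlift, ?_⟩
  have hind := linearIndepOn_of_forall_level hκ.bot_lt hlmono f hfb F hF
  refine hind.map (f := (phiPRange p G).mkQ) ?_
  rw [ker_mkQ, ← image_eq_range]
  exact disjoint_span_phiPRange hlift

/-- Shelah–Strüngmann: in the situation of an increasing continuous chain
`(G_α)_{α<κ.ord}` of subgroups of `G` (`κ` regular uncountable) with union `G`,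
`S` unbounded in `κ.ord`, a nondecreasing continuous sequence of cardinals
`(λ_α)` with supremum `λ`, homomorphisms `f_γ^α : G_α → ℤ/pℤ` and lifts
`h_{γ,δ}^α : G_α → ℤ` satisfying (a)–(g), no nonzero finite `ℤ/pℤ`-linear
combination of the union homomorphisms `f_γ : G → ℤ/pℤ` (`γ < λ`) factors
through the reduction `ℤ → ℤ/pℤ` via some `g ∈ Hom(G,ℤ)`; consequently the
classes of the `f_γ` in `Hom(G,ℤ/pℤ)/φ^p(Hom(G,ℤ))` are linearly independent. -/
theorem no_lifting_of_combinations (p : ℕ) (hp : p.Prime)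
    (κ : Cardinal) (hreg : κ.IsRegular) (hunc : Cardinal.aleph0 < κ)
    (S : Set Ordinal) (hSsub : ∀ α ∈ S, α < κ.ord)
    (hSunb : ∀ β < κ.ord, ∃ α ∈ S, β ≤ α)
    (G : Type) [AddCommGroup G]
    (Gs : Ordinal → AddSubgroup G)
    (hmono : ∀ {α β : Ordinal}, α ≤ β → β < κ.ord → Gs α ≤ Gs β)
    (hcont : ∀ δ < κ.ord, Order.IsSuccLimit δ →
      (Gs δ : Set G) = ⋃ (α : Ordinal) (_ : α < δ), (Gs α : Set G))
    (hunion : (⋃ (α : Ordinal) (_ : α < κ.ord), (Gs α : Set G)) = Set.univ)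
    (lam : Ordinal → Cardinal)
    (hlmono : ∀ {α β : Ordinal}, α ≤ β → β < κ.ord → lam α ≤ lam β)
    (hlcont : ∀ δ < κ.ord, Order.IsSuccLimit δ →
      lam δ = ⨆ α : {α : Ordinal // α < δ}, lam α.1)
    (lamSup : Cardinal)
    (hsup : lamSup = ⨆ α : {α : Ordinal // α < κ.ord}, lam α.1)
    (f : (α : Ordinal) → Ordinal → (Gs α →+ ZMod p))
    (h : (α : Ordinal) → Ordinal → Ordinal → (Gs α →+ ℤ))
    -- (a) compatibility of the `f`'s under restriction
    (hfa : ∀ {α β γ : Ordinal} (hsub : Gs α ≤ Gs β), α ≤ β → β < κ.ord →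
      γ < (lam α).ord → (f β γ).comp (AddSubgroup.inclusion hsub) = f α γ)
    -- (b) linear independence of the `f`'s at each level
    (hfb : ∀ α < κ.ord, LinearIndependent (ZMod p)
      (fun γ : {γ : Ordinal // γ < (lam α).ord} => f α γ.1))
    -- (c) each `h_{γ,δ}^α` lifts `f_γ^α` along `ℤ → ℤ/pℤ`
    (hfc : ∀ {α γ δ : Ordinal}, α < κ.ord → γ < (lam α).ord → α ≤ δ → δ < κ.ord →
      (Int.castAddHom (ZMod p)).comp (h α γ δ) = f α γ)
    -- (d) compatibility of the `h`'s under restriction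
    (hfd : ∀ {α β γ δ : Ordinal} (hsub : Gs α ≤ Gs β), α < β → β ≤ δ → δ < κ.ord →
      γ < (lam α).ord → (h β γ δ).comp (AddSubgroup.inclusion hsub) = h α γ δ)
    -- (e) `ℤ`-linear independence of the `h`'s at each level, so that
    -- `M_α = ⊕ ℤ·h_{γ,δ}^α` is free with basis the `h`'s
    (hfe : ∀ α < κ.ord, LinearIndependent ℤ
      (fun q : {q : Ordinal × Ordinal //
          q.1 < (lam α).ord ∧ α ≤ q.2 ∧ q.2 < κ.ord} => h α q.1.1 q.1.2))
    -- (f) for `α ∈ S`, homomorphisms `G_{α+1} → ℤ` whose reduction is a nonzero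
    -- element of the span of the `f_γ^{α+1}` lie in `M_{α+1}`
    (hff : ∀ α ∈ S, ∀ g : Gs (α + 1) →+ ℤ,
      (Int.castAddHom (ZMod p)).comp g ∈ Submodule.span (ZMod p)
        (Set.range fun γ : {γ : Ordinal // γ < (lam (α + 1)).ord} =>
          f (α + 1) γ.1) →
      (Int.castAddHom (ZMod p)).comp g ≠ 0 →
      g ∈ Submodule.span ℤ
        (Set.range fun q : {q : Ordinal × Ordinal //
            q.1 < (lam (α + 1)).ord ∧ α + 1 ≤ q.2 ∧ q.2 < κ.ord} =>
          h (α + 1) q.1.1 q.1.2))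
    -- (g) new `f`'s and `h`'s vanish on old groups
    (hfg : ∀ {α β γ : Ordinal} (hsub : Gs α ≤ Gs β), α ≤ β → β < κ.ord →
      (lam α).ord ≤ γ → γ < (lam β).ord →
      (f β γ).comp (AddSubgroup.inclusion hsub) = 0 ∧
      ∀ ρ : Ordinal, β ≤ ρ → ρ < κ.ord →
        (h β γ ρ).comp (AddSubgroup.inclusion hsub) = 0)
    -- the union homomorphisms `f_γ = ⋃ {f_γ^α : γ < λ_α}`
    (F : Ordinal → (G →+ ZMod p))
    (hF : ∀ {α γ : Ordinal}, α < κ.ord → γ < (lam α).ord →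
      ∀ x : Gs α, F γ ↑x = f α γ x) :
    (∀ (E : Finset Ordinal), (∀ γ ∈ E, γ < lamSup.ord) →
      ∀ (z : Ordinal → ZMod p) (g : G →+ ℤ),
        ∑ γ ∈ E, z γ • F γ = (Int.castAddHom (ZMod p)).comp g →
        ∑ γ ∈ E, z γ • F γ = 0) ∧
    LinearIndependent (ZMod p)
      (fun γ : {γ : Ordinal // γ < lamSup.ord} =>
        Submodule.Quotient.mk (p := phiPRange p G) (F γ.1)) :=
  no_lifting_of_combinations_general p κ hunc S hSsub hSunb G Gs hmono hunion lam hlmono lamSup hsup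
    f h hfb hfd hfe hff hfg F hF
end
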